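/- arXiv:2110.03978 — 3 statements merged into one kernel-verified Lean document; each statement's English description precedes it below -/
import Mathlib

section
/- Let M be a perfect matching of a graph G and S ⊆ M. Then S is a forcing set of M (i.e., M is the unique perfect matching of G containing S) if and only if every M-alternating cycle of G contains at least one edge of S. -/
open SimpleGraph

/-- The generalized Petersen graph `GP(n,k)`: vertices `u i = Sum.inl i`,
`v i = Sum.inr i`, edges `u i -- u (i+k)`, `u i -- v i`, `v i -- v (i+1)` (mod n). -/
def GP (n k : ℕ) : SimpleGraph (Fin n ⊕ Fin n) :=
  SimpleGraph.fromRel (fun a b =>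
    match a, b with
    | Sum.inl i, Sum.inl j => (j : ℕ) = ((i : ℕ) + k) % n
    | Sum.inl i, Sum.inr j => i = j
    | Sum.inr i, Sum.inr j => (j : ℕ) = ((i : ℕ) + 1) % n
    | _, _ => False)

/-- `S` is a forcing set of the perfect matching `M` of `G`:
`S` consists of edges of `M` and `M` is the unique perfect matching containing `S`. -/
def IsForcingSet {V : Type*} (G : SimpleGraph V) (M : G.Subgraph) (S : Set (Sym2 V)) : Prop :=
  S ⊆ M.edgeSet ∧
    ∀ M' : G.Subgraph, M'.IsPerfectMatching → S ⊆ M'.edgeSet → M' = M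

/-- The forcing number `f(G,M)`: minimum cardinality of a forcing set of `M`. -/
noncomputable def forcingNum {V : Type*} (G : SimpleGraph V) (M : G.Subgraph) : ℕ :=
  sInf {k | ∃ S : Set (Sym2 V), IsForcingSet G M S ∧ S.ncard = k}

/-- A cycle `p` of `G` is `M`-alternating: its edges lie alternately in `M` and outside `M`.
For a perfect matching `M` this is equivalent to saying that every vertex of the
cycle is covered by an edge of `M` lying on the cycle. -/
def IsAltCycle {V : Type*} (G : SimpleGraph V) (M : G.Subgraph) {v : V} (p : G.Walk v v) : Prop :=
  p.IsCycle ∧ ∀ u ∈ p.support, ∃ e ∈ p.edges, e ∈ M.edgeSet ∧ u ∈ e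

/-- `C(G,M)`: the maximum number of pairwise vertex-disjoint `M`-alternating cycles of `G`. -/
noncomputable def maxDisjAltCycles {V : Type*} (G : SimpleGraph V) (M : G.Subgraph) : ℕ :=
  sSup {k | ∃ c : Fin k → Σ v : V, G.Walk v v,
    (∀ i, IsAltCycle G M (c i).2) ∧
    Pairwise fun i j => List.Disjoint (c i).2.support (c j).2.support}

/-!
If an `M`-alternating cycle `C` avoids `S`, then `M ∆ C` is a perfect matching other than `M`
that still contains `S`. Conversely, if `M' ≠ M` is a perfect matching containing `S`, then
`M ∆ M'` is a nonempty disjoint union of cycles; any of them is `M`-alternating and, having no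
edge in `M ∩ M' ⊇ S`, avoids `S`.
-/

open scoped symmDiff

section

variable {V : Type*} {G : SimpleGraph V} {M M' : G.Subgraph}

theorem SimpleGraph.symmDiff_adj (H K : SimpleGraph V) (u w : V) :
    (H ∆ K).Adj u w ↔ H.Adj u w ∧ ¬K.Adj u w ∨ K.Adj u w ∧ ¬H.Adj u w :=
  Iff.rfl

theorem IsAltCycle.isAlternating {v : V} {p : G.Walk v v} (hM : M.IsMatching)
    (hp : IsAltCycle G M p) : p.toSubgraph.spanningCoe.IsAlternating M.spanningCoe := by
  intro u w w' hww' huw huw'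
  obtain ⟨e, hep, heM, hue⟩ := hp.2 u (p.mem_verts_toSubgraph.1 (p.toSubgraph.edge_vert huw))
  obtain ⟨x, rfl⟩ := Sym2.mem_iff_exists.1 hue
  have hux : p.toSubgraph.spanningCoe.Adj u x := p.mem_edges_toSubgraph.2 hep
  have hx : x = w ∨ x = w' := by
    by_contra! h
    obtain ⟨_, _, huniq⟩ := hp.1.isCycles_spanningCoe_toSubgraph.existsUnique_ne_adj huw
    exact h.2 ((huniq x ⟨Ne.symm h.1, hux⟩).trans (huniq w' ⟨hww', huw'⟩).symm)
  simp only [Subgraph.spanningCoe_adj]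
  rcases hx with rfl | rfl
  · exact iff_of_true heM fun h => hww' (hM.eq_of_adj_left heM h)
  · exact iff_of_false (fun h => hww' (hM.eq_of_adj_left h heM)) (not_not_intro heM)

theorem IsAltCycle.exists_isPerfectMatching_edgeSet_eq {v : V} {p : G.Walk v v}
    (hM : M.IsPerfectMatching) (hp : IsAltCycle G M p) :
    ∃ M' : G.Subgraph, M'.IsPerfectMatching ∧ M'.edgeSet = M.edgeSet ∆ p.edgeSet := by
  have hle : M.spanningCoe ∆ p.toSubgraph.spanningCoe ≤ G :=
    symmDiff_le_sup.trans (sup_le M.spanningCoe_le p.toSubgraph.spanningCoe_le)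
  refine ⟨G.toSubgraph _ hle, ?_, ?_⟩
  · exact (Subgraph.IsPerfectMatching.toSubgraph_iff hle).2
      (hM.symmDiff_of_isAlternating (hp.isAlternating hM.1) hp.1.isCycles_spanningCoe_toSubgraph)
  · ext e
    induction e using Sym2.ind
    simp [symmDiff_adj, Walk.adj_toSubgraph_iff_mem_edges, Set.mem_symmDiff]

theorem SimpleGraph.Subgraph.IsMatching.symmDiff_adj_of_adj (hM : M.IsMatching)
    (hM' : M'.IsMatching) {u x y : V} (hy : (M.spanningCoe ∆ M'.spanningCoe).Adj u y)
    (hx : M.Adj u x) : (M.spanningCoe ∆ M'.spanningCoe).Adj u x := by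
  simp only [symmDiff_adj, Subgraph.spanningCoe_adj] at hy ⊢
  refine Or.inl ⟨hx, fun hx' => ?_⟩
  rcases hy with ⟨hy, hy'⟩ | ⟨hy', hy⟩
  · exact hy' (hM.eq_of_adj_left hx hy ▸ hx')
  · exact hy (hM'.eq_of_adj_left hx' hy' ▸ hx)

theorem SimpleGraph.Subgraph.IsPerfectMatching.exists_symmDiff_adj_of_ne
    (hM : M.IsPerfectMatching) (hM' : M'.IsPerfectMatching) (hne : M' ≠ M) :
    ∃ u y, (M.spanningCoe ∆ M'.spanningCoe).Adj u y := by
  by_contra! h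
  refine hne (Subgraph.ext (by rw [hM'.2.verts_eq_univ, hM.2.verts_eq_univ]) ?_)
  ext a b
  have := h a b
  rw [symmDiff_adj] at this
  tauto

theorem SimpleGraph.Subgraph.IsPerfectMatching.exists_isAltCycle_of_ne [Finite V]
    (hM : M.IsPerfectMatching) (hM' : M'.IsPerfectMatching) (hne : M' ≠ M) :
    ∃ (v : V) (p : G.Walk v v),
      IsAltCycle G M p ∧ ∀ e ∈ p.edges, e ∈ M.edgeSet → e ∉ M'.edgeSet := by
  classical
  have := Fintype.ofFinite V
  set D := M.spanningCoe ∆ M'.spanningCoe with hD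
  have hDG : D ≤ G := symmDiff_le_sup.trans (sup_le M.spanningCoe_le M'.spanningCoe_le)
  have hDcyc : D.IsCycles := hM.symmDiff_isCycles hM'
  obtain ⟨u, y, huy⟩ := hM.exists_symmDiff_adj_of_ne hM' hne
  obtain ⟨c, hc, -⟩ := hDcyc.exists_cycle_toSubgraph_verts_eq_connectedComponentSupp
    (c := D.connectedComponentMk u) rfl ⟨y, huy⟩
  refine ⟨u, c.mapLe hDG, ⟨hc.mapLe hDG, fun w hw => ?_⟩, fun e he => ?_⟩
  · rw [Walk.support_mapLe_eq_support] at hw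
    obtain ⟨x, hx, -⟩ := hM.1 (hM.2 w)
    obtain ⟨y', hy'⟩ : (c.toSubgraph.neighborSet w).Nonempty :=
      Set.nonempty_of_ncard_ne_zero (by rw [hc.ncard_neighborSet_toSubgraph_eq_two hw]; omega)
    -- `w` has degree 2 both in `c` and in `D`, so every `D`-edge at `w` lies on `c`
    have hcx : c.toSubgraph.Adj w x :=
      (hc.adj_toSubgraph_iff_of_isCycles hDcyc (c.mem_verts_toSubgraph.2 hw) x).2
        (hM.1.symmDiff_adj_of_adj hM'.1 hy'.adj_sub hx)
    exact ⟨s(w, x), by rw [Walk.edges_mapLe_eq_edges]; exact c.mem_edges_toSubgraph.1 hcx, hx,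
      Sym2.mem_mk_left _ _⟩
  · rw [Walk.edges_mapLe_eq_edges] at he
    have heD := c.edges_subset_edgeSet he
    induction e using Sym2.ind
    simp only [hD, mem_edgeSet, symmDiff_adj, Subgraph.spanningCoe_adj] at heD
    simp only [Subgraph.mem_edgeSet]
    tauto

end

theorem stmt2 {V : Type*} [Fintype V] (G : SimpleGraph V) (M : G.Subgraph)
    (hM : M.IsPerfectMatching) (S : Set (Sym2 V)) (hS : S ⊆ M.edgeSet) :
    IsForcingSet G M S ↔
      ∀ (v : V) (p : G.Walk v v), IsAltCycle G M p → ∃ e ∈ p.edges, e ∈ S := by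
  constructor
  · rintro ⟨-, hforce⟩ v p hp
    by_contra! hpS
    obtain ⟨M', hM', hM'E⟩ := hp.exists_isPerfectMatching_edgeSet_eq hM
    have hSM' : S ⊆ M'.edgeSet := fun f hf =>
      hM'E ▸ Set.mem_symmDiff.2 (Or.inl ⟨hS hf, fun hfp => hpS f hfp hf⟩)
    obtain ⟨e, hep, heM, -⟩ := hp.2 v p.start_mem_support
    have heM' : e ∉ M'.edgeSet := by
      rw [hM'E, Set.mem_symmDiff]
      tauto
    exact heM' (hforce M' hM' hSM' ▸ heM)
  · intro hhit
    refine ⟨hS, fun M' hM' hSM' => by_contra fun hne => ?_⟩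
    obtain ⟨v, p, hp, hpM'⟩ := hM.exists_isAltCycle_of_ne hM' hne
    obtain ⟨e, hep, heS⟩ := hhit v p hp
    exact hpM' e hep (hS heS) (hSM' heS)
end

section
/- Every perfect matching of the Petersen graph GP(5,2) has forcing number exactly 2; equivalently, the forcing polynomial of GP(5,2) is 6x^2. -/
open SimpleGraph

/-!
Record a perfect matching by the index, among the three neighbours of each vertex, of its
partner. An exhaustive search over these choices shows that `GP(5,2)` has exactly six perfect
matchings: the one formed by the five spokes `u i v i`, and for each `k` the one whose only
spoke is `u k v k`. Every edge of one of them lies in another one, so no single edge forces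
it, while a suitable pair of its edges does.
-/

open Function

namespace SimpleGraph.Subgraph

variable {V : Type*} {G : SimpleGraph V}

def ofInvolutive (f : V → V) (hadj : ∀ a, G.Adj a (f a)) (hf : Involutive f) : G.Subgraph where
  verts := Set.univ
  Adj a b := f a = b
  adj_sub := by rintro a _ rfl; exact hadj a
  edge_vert _ := Set.mem_univ _
  symm := ⟨by rintro a _ rfl; exact hf a⟩

variable {f : V → V} {hadj : ∀ a, G.Adj a (f a)} {hf : Involutive f}

theorem ofInvolutive_adj {a b : V} : (ofInvolutive f hadj hf).Adj a b ↔ f a = b := Iff.rfl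

theorem isPerfectMatching_ofInvolutive : (ofInvolutive f hadj hf).IsPerfectMatching :=
  isPerfectMatching_iff.mpr fun a => ⟨f a, rfl, fun _ => Eq.symm⟩

theorem IsPerfectMatching.eq_ofInvolutive {M : G.Subgraph} (hM : M.IsPerfectMatching)
    (hMf : ∀ a, M.Adj a (f a)) : M = ofInvolutive f hadj hf := by
  refine Subgraph.ext (Set.eq_univ_of_forall hM.2) <|
    funext₂ fun a b => propext ⟨fun hab => ?_, ?_⟩
  · exact ((isPerfectMatching_iff.mp hM a).unique (hMf a) hab : f a = b)
  · rintro rfl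
    exact hMf a

theorem ofInvolutive_injective {g : V → V} {hadj' : ∀ a, G.Adj a (g a)} {hg : Involutive g}
    (h : ofInvolutive f hadj hf = ofInvolutive g hadj' hg) : f = g :=
  funext fun a => by
    have hga : (ofInvolutive g hadj' hg).Adj a (f a) := h ▸ ofInvolutive_adj.mpr rfl
    exact (ofInvolutive_adj.mp hga).symm

end SimpleGraph.Subgraph

theorem forcingNum_eq_two {V : Type*} [Finite V] {G : SimpleGraph V} {M : G.Subgraph}
    {e₁ e₂ : Sym2 V} (hne : e₁ ≠ e₂) (hforce : IsForcingSet G M {e₁, e₂})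
    (hshared : ∀ e ∈ M.edgeSet,
      ∃ M' : G.Subgraph, M'.IsPerfectMatching ∧ e ∈ M'.edgeSet ∧ M' ≠ M) :
    forcingNum G M = 2 := by
  have two_le : ∀ S, IsForcingSet G M S → 2 ≤ S.ncard := by
    rintro S ⟨hSM, hS⟩
    by_contra! hlt
    rcases (Set.ncard_le_one_iff_eq S.toFinite).mp (Nat.le_of_lt_succ hlt) with rfl | ⟨e, rfl⟩
    · obtain ⟨M', hM', -, hM'M⟩ := hshared e₁ (hforce.1 (Set.mem_insert _ _))
      exact hM'M (hS M' hM' (Set.empty_subset _))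
    · obtain ⟨M', hM', he, hM'M⟩ := hshared e (hSM rfl)
      exact hM'M (hS M' hM' (Set.singleton_subset_iff.mpr he))
  exact le_antisymm (Nat.sInf_le ⟨_, hforce, Set.ncard_pair hne⟩)
    (le_csInf ⟨_, _, hforce, rfl⟩ (by rintro _ ⟨S, hS, rfl⟩; exact two_le S hS))

instance (n k : ℕ) : DecidableRel (GP n k).Adj := fun a b => by
  rw [GP, fromRel_adj]
  cases a <;> cases b <;> infer_instance

namespace Petersen

abbrev V := Fin 5 ⊕ Fin 5

def neighbor : V → Fin 3 → V
  | .inl i, 0 => .inl (i + 2)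
  | .inl i, 1 => .inl (i - 2)
  | .inl i, _ => .inr i
  | .inr i, 0 => .inr (i + 1)
  | .inr i, 1 => .inr (i - 1)
  | .inr i, _ => .inl i

theorem exists_neighbor_eq_of_adj : ∀ v w : V, (GP 5 2).Adj v w → ∃ i, neighbor v i = w := by
  decide

/-- The vertices `u (k+1), …, u (k+4)` are paired along the pentagram and
`v (k+1), …, v (k+4)` along the pentagon. -/
def oneSpoke (k : Fin 5) : V → V
  | .inl j => if j = k then .inr k else .inl (k + ![0, 3, 4, 1, 2] (j - k))
  | .inr j => if j = k then .inl k else .inr (k + ![0, 2, 1, 4, 3] (j - k))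

def partner : Option (Fin 5) → V → V
  | none => Sum.swap
  | some k => oneSpoke k

theorem adj_partner : ∀ k v, (GP 5 2).Adj v (partner k v) := by decide

theorem involutive_partner (k : Option (Fin 5)) : Involutive (partner k) := by
  revert k
  unfold Involutive
  decide

theorem partner_injective : Injective partner := by
  have : ∀ k k', (∀ v, partner k v = partner k' v) → k = k' := by decide
  exact fun k k' h => this k k' (congrFun h)

def matching (k : Option (Fin 5)) : (GP 5 2).Subgraph :=
  Subgraph.ofInvolutive (partner k) (adj_partner k) (involutive_partner k)

theorem mem_edgeSet_matching {k : Option (Fin 5)} {a b : V} :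
    s(a, b) ∈ (matching k).edgeSet ↔ partner k a = b := Iff.rfl

theorem matching_injective : Injective matching :=
  fun _ _ h => partner_injective (Subgraph.ofInvolutive_injective h)

theorem exists_partner_eq_of_involutive (g : V → Fin 3)
    (hg : Involutive fun v => neighbor v (g v)) :
    ∃ k, ∀ v, neighbor v (g v) = partner k v := by
  -- Choosing on the outer cycle first leaves only 11 of its 243 choices to be extended.
  have search : ∀ gv : Fin 5 → Fin 3,
      (∀ i j, neighbor (.inr i) (gv i) = .inr j → neighbor (.inr j) (gv j) = .inr i) →
      ∀ gu : Fin 5 → Fin 3,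
      Involutive (fun v => neighbor v (Sum.elim gu gv v)) →
      ∃ k, ∀ v, neighbor v (Sum.elim gu gv v) = partner k v := by
    unfold Involutive
    decide +kernel
  have outer : ∀ i j,
      neighbor (.inr i) (g (.inr i)) = .inr j → neighbor (.inr j) (g (.inr j)) = .inr i :=
    fun i j hij => by simpa only [hij] using hg (.inr i)
  rw [← Sum.elim_comp_inl_inr g] at hg ⊢
  exact search _ outer _ hg

theorem eq_matching_of_isPerfectMatching {M : (GP 5 2).Subgraph} (hM : M.IsPerfectMatching) :
    ∃ k, M = matching k := by
  have hM' := Subgraph.isPerfectMatching_iff.mp hM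
  have hchoice : ∀ v, ∃ i, M.Adj v (neighbor v i) := fun v => by
    obtain ⟨w, hw, -⟩ := hM' v
    obtain ⟨i, rfl⟩ := exists_neighbor_eq_of_adj v w (M.adj_sub hw)
    exact ⟨i, hw⟩
  choose g hg using hchoice
  obtain ⟨k, hk⟩ := exists_partner_eq_of_involutive g
    fun v => (hM' _).unique (hg _) (M.adj_symm (hg v))
  exact ⟨k, hM.eq_ofInvolutive fun v => hk v ▸ hg v⟩

theorem setOf_isPerfectMatching :
    {M : (GP 5 2).Subgraph | M.IsPerfectMatching} = Set.range matching := by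
  ext M
  refine ⟨fun hM => ?_, ?_⟩
  · obtain ⟨k, rfl⟩ := eq_matching_of_isPerfectMatching hM
    exact ⟨k, rfl⟩
  · rintro ⟨k, rfl⟩
    exact Subgraph.isPerfectMatching_ofInvolutive

theorem forcingNum_matching (k : Option (Fin 5)) : forcingNum (GP 5 2) (matching k) = 2 := by
  have pair : ∃ a b : V, s(a, partner k a) ≠ s(b, partner k b) ∧
      ∀ k', partner k' a = partner k a → partner k' b = partner k b → k' = k := by
    revert k
    decide
  have shared : ∀ a, ∃ k', k' ≠ k ∧ partner k' a = partner k a := by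
    revert k
    decide
  obtain ⟨a, b, hab, hforce⟩ := pair
  refine forcingNum_eq_two hab ⟨?_, ?_⟩ ?_
  · rintro _ (rfl | rfl) <;> exact mem_edgeSet_matching.mpr rfl
  · intro M hM hsub
    obtain ⟨k', rfl⟩ := eq_matching_of_isPerfectMatching hM
    exact congrArg matching (hforce k' (hsub (Set.mem_insert _ _))
      (hsub (Set.mem_insert_of_mem _ rfl)))
  · intro e he
    induction e using Sym2.ind with
    | _ x y =>
      obtain ⟨k', hk', hx⟩ := shared x
      refine ⟨matching k', Subgraph.isPerfectMatching_ofInvolutive, ?_,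
        matching_injective.ne hk'⟩
      exact mem_edgeSet_matching.mpr (hx.trans he)

end Petersen

theorem stmt4 :
    (∀ M : (GP 5 2).Subgraph, M.IsPerfectMatching → forcingNum (GP 5 2) M = 2) ∧
    {M : (GP 5 2).Subgraph | M.IsPerfectMatching}.ncard = 6 := by
  refine ⟨fun M hM => ?_, ?_⟩
  · obtain ⟨k, rfl⟩ := Petersen.eq_matching_of_isPerfectMatching hM
    exact Petersen.forcingNum_matching k
  · rw [Petersen.setOf_isPerfectMatching, Set.ncard_range_of_injective Petersen.matching_injective,
      Nat.card_eq_fintype_card, Fintype.card_option, Fintype.card_fin]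
end

section
/- In the Petersen graph GP(5,2), the set {u_0v_0, u_1v_1} is a forcing set of the all-spokes perfect matching M_6 = {u_0v_0, u_1v_1, u_2v_2, u_3v_3, u_4v_4}. -/
open SimpleGraph

def gpf (n k : ℕ) : Fin n ⊕ Fin n → Fin n ⊕ Fin n → Bool := fun a b =>
  match a, b with
  | Sum.inl i, Sum.inl j => (j : ℕ) == ((i : ℕ) + k) % n
  | Sum.inl i, Sum.inr j => i == j
  | Sum.inr i, Sum.inr j => (j : ℕ) == ((i : ℕ) + 1) % n
  | _, _ => false

instance inst_s7 (n k : ℕ) : DecidableRel (GP n k).Adj := fun a b =>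
  decidable_of_iff (a ≠ b ∧ (gpf n k a b ∨ gpf n k b a)) (by
    rw [GP, SimpleGraph.fromRel_adj]
    have h : ∀ x y, (gpf n k x y = true) ↔ (match x, y with
      | Sum.inl i, Sum.inl j => (j : ℕ) = ((i : ℕ) + k) % n
      | Sum.inl i, Sum.inr j => i = j
      | Sum.inr i, Sum.inr j => (j : ℕ) = ((i : ℕ) + 1) % n
      | _, _ => False) := by
      intro x y
      rcases x with i | i <;> rcases y with j | j <;> simp [gpf]
    rw [h, h])

theorem stmt7 (M₆ : (GP 5 2).Subgraph) (hv : M₆.verts = Set.univ)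
    (he : M₆.edgeSet = {e | ∃ i : Fin 5, e = s((Sum.inl i : Fin 5 ⊕ Fin 5), Sum.inr i)}) :
    M₆.IsPerfectMatching ∧
    IsForcingSet (GP 5 2) M₆ {s((Sum.inl 0 : Fin 5 ⊕ Fin 5), Sum.inr 0), s((Sum.inl 1 : Fin 5 ⊕ Fin 5), Sum.inr 1)} := by
  classical
  -- characterization of M₆.Adj
  have hM6 : ∀ a b, M₆.Adj a b ↔ ∃ i : Fin 5,
      (a = Sum.inl i ∧ b = Sum.inr i) ∨ (a = Sum.inr i ∧ b = Sum.inl i) := by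
    intro a b
    rw [← SimpleGraph.Subgraph.mem_edgeSet, he]
    simp only [Set.mem_setOf_eq, Sym2.eq_iff]
  have hPM : M₆.IsPerfectMatching := by
    constructor
    · rintro a -
      rcases a with i | i
      · refine ⟨Sum.inr i, (hM6 _ _).mpr ⟨i, Or.inl ⟨rfl, rfl⟩⟩, fun w hw => ?_⟩
        rcases (hM6 _ _).mp hw with ⟨j, ⟨h1, h2⟩ | ⟨h1, h2⟩⟩
        · cases Sum.inl.inj h1; exact h2
        · exact absurd h1 (by simp)
      · refine ⟨Sum.inl i, (hM6 _ _).mpr ⟨i, Or.inr ⟨rfl, rfl⟩⟩, fun w hw => ?_⟩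
        rcases (hM6 _ _).mp hw with ⟨j, ⟨h1, h2⟩ | ⟨h1, h2⟩⟩
        · exact absurd h1 (by simp)
        · cases Sum.inr.inj h1; exact h2
    · intro a; rw [hv]; exact Set.mem_univ a
  refine ⟨hPM, ?_, ?_⟩
  · intro e heS
    rw [he]
    rcases heS with rfl | heS
    · exact ⟨0, rfl⟩
    · rcases heS with rfl
      exact ⟨1, rfl⟩
  · intro M' hM' hS
    have uniq : ∀ a b c : Fin 5 ⊕ Fin 5, M'.Adj a b → M'.Adj a c → b = c := by
      intro a b c h1 h2
      obtain ⟨w, -, hw⟩ := hM'.1 (hM'.2 a)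
      exact (hw b h1).trans (hw c h2).symm
    have nb : ∀ a b, M'.Adj a b → (GP 5 2).Adj a b := fun a b h => M'.adj_sub h
    have h0 : M'.Adj (Sum.inl 0) (Sum.inr 0) :=
      SimpleGraph.Subgraph.mem_edgeSet.mp (hS (by left; rfl))
    have h1 : M'.Adj (Sum.inl 1) (Sum.inr 1) :=
      SimpleGraph.Subgraph.mem_edgeSet.mp (hS (by right; rfl))
    -- u3 must be matched to v3
    have h3 : M'.Adj (Sum.inl 3) (Sum.inr 3) := by
      obtain ⟨w, hw, -⟩ := hM'.1 (hM'.2 (Sum.inl 3))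
      have hcases : ∀ b, (GP 5 2).Adj (Sum.inl 3) b →
          b = Sum.inl 0 ∨ b = Sum.inl 1 ∨ b = Sum.inr 3 := by decide
      rcases hcases w (nb _ _ hw) with rfl | rfl | rfl
      · exact absurd (uniq _ _ _ hw.symm h0) (by simp)
      · exact absurd (uniq _ _ _ hw.symm h1) (by simp)
      · exact hw
    -- v2 must be matched to u2
    have h2 : M'.Adj (Sum.inr 2) (Sum.inl 2) := by
      obtain ⟨w, hw, -⟩ := hM'.1 (hM'.2 (Sum.inr 2))
      have hcases : ∀ b, (GP 5 2).Adj (Sum.inr 2) b →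
          b = Sum.inr 1 ∨ b = Sum.inr 3 ∨ b = Sum.inl 2 := by decide
      rcases hcases w (nb _ _ hw) with rfl | rfl | rfl
      · exact absurd (uniq _ _ _ hw.symm h1.symm) (by simp)
      · exact absurd (uniq _ _ _ hw.symm h3.symm) (by simp)
      · exact hw
    -- u4 must be matched to v4
    have h4 : M'.Adj (Sum.inl 4) (Sum.inr 4) := by
      obtain ⟨w, hw, -⟩ := hM'.1 (hM'.2 (Sum.inl 4))
      have hcases : ∀ b, (GP 5 2).Adj (Sum.inl 4) b →
          b = Sum.inl 1 ∨ b = Sum.inl 2 ∨ b = Sum.inr 4 := by decide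
      rcases hcases w (nb _ _ hw) with rfl | rfl | rfl
      · exact absurd (uniq _ _ _ hw.symm h1) (by simp)
      · exact absurd (uniq _ _ _ hw.symm h2.symm) (by simp)
      · exact hw
    have spoke : ∀ i : Fin 5, M'.Adj (Sum.inl i) (Sum.inr i) := by
      intro i
      fin_cases i
      exacts [h0, h1, h2.symm, h3, h4]
    ext a b
    · rw [hv, hM'.2.verts_eq_univ]
    · rw [hM6]
      constructor
      · intro hab
        rcases a with i | i
        · exact ⟨i, Or.inl ⟨rfl, uniq _ _ _ hab (spoke i)⟩⟩
        · exact ⟨i, Or.inr ⟨rfl, uniq _ _ _ hab (spoke i).symm⟩⟩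
      · rintro ⟨i, ⟨rfl, rfl⟩ | ⟨rfl, rfl⟩⟩
        · exact spoke i
        · exact (spoke i).symm
end
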